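/- For all integers n ≥ 0 and k ≥ 2, the counts h_{n,k,r} satisfy the convolution recurrence h_{n,k,m−1} = Σ_{j=0}^{n} h_{j,k−1,0} · h_{n−j,1,m−1}. -/

import Mathlib

open scoped Classical
open Finset

noncomputable section

/-- The set of positive nondecreasing sequences of length `n` bounded above by `b` is finite. -/
lemma boundedSeq_finite (n : ℕ) (b : ℕ → ℕ) :
    {p : Fin n → ℕ | Monotone p ∧ ∀ i : Fin n, 1 ≤ p i ∧ p i ≤ b i}.Finite := by
  have h : {p : Fin n → ℕ | Monotone p ∧ ∀ i : Fin n, 1 ≤ p i ∧ p i ≤ b i} ⊆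
      Set.pi Set.univ (fun i : Fin n => Set.Iic (b i)) := by
    intro p hp
    rw [Set.mem_pi]
    intro i _
    exact (hp.2 i).2
  exact (Set.Finite.pi fun i : Fin n => Set.finite_Iic (b (i : ℕ))).subset h

/-- The finset of nondecreasing sequences `p : Fin n → ℕ` of positive integers
with `p i ≤ b i` for all `i`. -/
def BSeq (n : ℕ) (b : ℕ → ℕ) : Finset (Fin n → ℕ) := (boundedSeq_finite n b).toFinset

/-- `PK m n` : the u-parking distributions of length `n`, i.e. nondecreasing sequences
of positive integers with `p i ≤ m*(i-1)+1` (here indexed from `0`, so `p i ≤ m*i+1`). -/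
def PK (m n : ℕ) : Finset (Fin n → ℕ) := BSeq n (fun i => m * i + 1)

/-- `luck p` : the number of indices `i` with `p i = m*(i-1)+1` (0-indexed: `m*i+1`). -/
def luck (m : ℕ) {n : ℕ} (p : Fin n → ℕ) : ℕ :=
  (Finset.univ.filter (fun i : Fin n => p i = m * (i : ℕ) + 1)).card

/-- `freq j p` = `ω_j(p)` : the number of indices `i` with `p i = j`. -/
def freq (j : ℕ) {n : ℕ} (p : Fin n → ℕ) : ℕ :=
  (Finset.univ.filter (fun i : Fin n => p i = j)).card

/-- `hcnt m n k r` = `h_{n,k,r}` : the number of nondecreasing sequences of positive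
integers with `p_i ≤ m*(i+k-1) - r` for `1 ≤ i ≤ n` (0-indexed: `p i ≤ m*(i+k) - r`). -/
def hcnt (m n k r : ℕ) : ℕ := (BSeq n (fun i => m * (i + k) - r)).card

/-- `Cnt m n k` = `C_{n,k}` : the number of `p ∈ PK m n` with `luck p = k`. -/
def Cnt (m n k : ℕ) : ℕ := ((PK m n).filter (fun p => luck m p = k)).card

/-- `Rpoly m n` = `R_n(q) = Σ_k C_{n,k} q^k ∈ ℤ[q]`. -/
def Rpoly (m n : ℕ) : Polynomial ℤ :=
  ∑ k ∈ Finset.range (n + 1), (Cnt m n k : Polynomial ℤ) * Polynomial.X ^ k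

/-- `hfull t k` : the complete homogeneous symmetric polynomial of degree `k`
in variables `q_0, …, q_{t-1}`, i.e. the sum of all monomials of total degree `k`. -/
def hfull (t k : ℕ) : MvPolynomial (Fin t) ℤ :=
  ∑ α ∈ Finset.Nat.antidiagonalTuple t k, ∏ i : Fin t, MvPolynomial.X i ^ α i

/-- `ffix m p ℓ` = `i_ℓ(p)` : the first fixed point of type `ℓ`, the smallest `k` with
`2 ≤ k ≤ n` and `p_k ≥ m*(k-2)+1+ℓ` (1-indexed), or `n+1` if there is none. -/
def ffix (m : ℕ) {n : ℕ} (p : Fin n → ℕ) (ℓ : ℕ) : ℕ :=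
  sInf ({k | 2 ≤ k ∧ ∃ i : Fin n, (i : ℕ) + 1 = k ∧ m * (k - 2) + 1 + ℓ ≤ p i} ∪ {n + 1})

/-- The extended first fixed points: `i_0 = 2`, `i_{m+1} = n+1`, and `i_ℓ = ffix m p ℓ`
for `1 ≤ ℓ ≤ m`. -/
def ffixE (m : ℕ) {n : ℕ} (p : Fin n → ℕ) (j : ℕ) : ℕ :=
  if j = 0 then 2 else if j = m + 1 then n + 1 else ffix m p j

/-- `pget p k` = `p_k` (1-indexed), `0` out of range. -/
def pget {n : ℕ} (p : Fin n → ℕ) (k : ℕ) : ℕ := if h : k - 1 < n then p ⟨k - 1, h⟩ else 0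

/-- The `(ℓ+1)`-st part `P_{ℓ+1}` (for `0 ≤ ℓ ≤ m`) of the first-return decomposition of `p`:
the list `(p_k - (p_{i_ℓ} - 1))` for `i_ℓ ≤ k ≤ i_{ℓ+1} - 1`. -/
def FRD (m : ℕ) {n : ℕ} (p : Fin n → ℕ) (ℓ : ℕ) : List ℕ :=
  (List.range (ffixE m p (ℓ + 1) - ffixE m p ℓ)).map
    (fun t => pget p (ffixE m p ℓ + t) - (pget p (ffixE m p ℓ) - 1))

/-- A list is a u-parking distribution: nondecreasing, with `l.get i ∈ [1, m*i+1]`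
(0-indexed). -/
def isPKlist (m : ℕ) (l : List ℕ) : Prop :=
  l.Pairwise (· ≤ ·) ∧ ∀ i : Fin l.length, 1 ≤ l.get i ∧ l.get i ≤ m * (i : ℕ) + 1

/-- `θ(p)` : the nondecreasing rearrangement of the concatenation of `p` with the list of
all `j ∈ {1, …, m*n-m+1}` with `j ≢ 1 (mod m)`. -/
def theta (m n : ℕ) (p : Fin n → ℕ) : List ℕ :=
  Multiset.sort
    ((List.ofFn p : Multiset ℕ) +
      (((List.range (m * n - m + 1)).map (· + 1)).filter
        (fun j => ¬ j ≡ 1 [MOD m]) : List ℕ)) (· ≤ ·)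

/-- Parking distributions on the `m`-caterpillar of length `n`, as nondecreasing lists. -/
def PKcat (m n : ℕ) : Set (List ℕ) :=
  {a | a.length = m * n - m + 1 ∧ a.Pairwise (· ≤ ·) ∧
       (∀ x ∈ a, 1 ≤ x ∧ x ≤ m * n - m + 1) ∧
       (∀ i : ℕ, 1 ≤ i → i ≤ n →
         m * (i - 1) + 1 ≤ (a.filter (fun x => x ≤ m * (i - 1) + 1)).length) ∧
       (∀ j : ℕ, 1 ≤ j → j ≤ m * n - m + 1 → ¬ j ≡ 1 [MOD m] → j ∈ a)}

/-!
Split a sequence counted by `h_{n,k,m-1}` at the first index `j` where it exceeds the bound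
`m (j + k - 2)` of `h_{·,k-1,0}` (1-indexed). The entries before `j` form a sequence counted by
`h_{j-1,k-1,0}`, and subtracting `m (j + k - 2)` from the entries from `j` on leaves a u-parking
distribution of length `n - j + 1`: the two bounds `m (i + k - 1) - (m - 1)` and `m (i - j) + 1`
differ by exactly that shift. Conversely any such pair glues back to a sequence that first exceeds
the bound at `j`.
-/

lemma mem_BSeq {n : ℕ} {b : ℕ → ℕ} {p : Fin n → ℕ} :
    p ∈ BSeq n b ↔ Monotone p ∧ ∀ i : Fin n, 1 ≤ p i ∧ p i ≤ b i := by
  rw [BSeq, Set.Finite.mem_toFinset]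
  rfl

section Splitting

variable {n : ℕ} {b c d : ℕ → ℕ}

def firstExceed (c : ℕ → ℕ) (p : Fin n → ℕ) : ℕ :=
  sInf ({j | ∃ h : j < n, c j < p ⟨j, h⟩} ∪ {n})

lemma firstExceed_le (c : ℕ → ℕ) (p : Fin n → ℕ) : firstExceed c p ≤ n :=
  Nat.sInf_le (Or.inr rfl)

lemma firstExceed_eq_iff {p : Fin n → ℕ} {j : ℕ} (hj : j ≤ n) :
    firstExceed c p = j ↔
      (∀ i : Fin n, (i : ℕ) < j → p i ≤ c i) ∧ ∀ h : j < n, c j < p ⟨j, h⟩ := by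
  constructor
  · rintro rfl
    refine ⟨fun i hi => ?_, fun h => ?_⟩
    · have hi' := Nat.notMem_of_lt_sInf hi
      simp only [Set.mem_union, Set.mem_singleton_iff, not_or] at hi'
      exact not_lt.1 fun hlt => hi'.1 ⟨i.isLt, hlt⟩
    · rcases Nat.sInf_mem (⟨n, Or.inr rfl⟩ : ({j | ∃ h : j < n, c j < p ⟨j, h⟩} ∪ {n}).Nonempty)
        with ⟨_, hlt⟩ | heq
      · exact hlt
      · exact absurd (Set.mem_singleton_iff.1 heq) h.ne
  · rintro ⟨hbelow, hat⟩
    apply le_antisymm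
    · apply Nat.sInf_le
      rcases hj.lt_or_eq with h | rfl
      · exact Or.inl ⟨h, hat h⟩
      · exact Or.inr rfl
    · refine le_csInf ⟨n, Or.inr rfl⟩ ?_
      rintro x (⟨hx, hlt⟩ | rfl)
      · by_contra! hxj
        exact (hbelow ⟨x, hx⟩ hxj).not_gt hlt
      · exact hj

def splitAt (c : ℕ → ℕ) {j : ℕ} (hj : j ≤ n) (p : Fin n → ℕ) :
    (Fin j → ℕ) × (Fin (n - j) → ℕ) :=
  (fun i => p (Fin.castLE hj i), fun i => p ⟨j + i, by omega⟩ - c j)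

def glue (c : ℕ → ℕ) {j : ℕ} (q : (Fin j → ℕ) × (Fin (n - j) → ℕ)) (i : Fin n) : ℕ :=
  if h : (i : ℕ) < j then q.1 ⟨i, h⟩ else c j + q.2 ⟨i - j, by omega⟩

lemma glue_of_lt {j : ℕ} (q : (Fin j → ℕ) × (Fin (n - j) → ℕ)) (i : Fin n) (h : (i : ℕ) < j) :
    glue c q i = q.1 ⟨i, h⟩ :=
  dif_pos h

lemma glue_of_le {j : ℕ} (q : (Fin j → ℕ) × (Fin (n - j) → ℕ)) (i : Fin n) (h : j ≤ i) :
    glue c q i = c j + q.2 ⟨i - j, Nat.sub_lt_sub_right h i.isLt⟩ :=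
  dif_neg (not_lt.2 h)

lemma glue_splitAt {j : ℕ} (hj : j ≤ n) {p : Fin n → ℕ}
    (hp : ∀ i : Fin n, j ≤ i → c j ≤ p i) : glue c (splitAt c hj p) = p := by
  funext i
  rcases lt_or_ge (i : ℕ) j with h | h
  · rw [glue_of_lt _ i h]
    rfl
  · rw [glue_of_le _ i h]
    simp only [splitAt, Nat.add_sub_cancel' h]
    exact Nat.add_sub_cancel' (hp i h)

lemma splitAt_glue {j : ℕ} (hj : j ≤ n) (q : (Fin j → ℕ) × (Fin (n - j) → ℕ)) :
    splitAt c hj (glue c q) = q := by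
  refine Prod.ext (funext fun i => ?_) (funext fun i => ?_)
  · exact glue_of_lt q _ i.isLt
  · simp only [splitAt]
    rw [glue_of_le q _ (Nat.le_add_right j i)]
    simp

lemma splitAt_mem (hb : ∀ i j, b (j + i) = c j + d i) {j : ℕ} (hj : j ≤ n) {p : Fin n → ℕ}
    (hp : p ∈ BSeq n b) (hpj : firstExceed c p = j) :
    (splitAt c hj p).1 ∈ BSeq j c ∧ (splitAt c hj p).2 ∈ BSeq (n - j) d := by
  obtain ⟨hmono, hbd⟩ := mem_BSeq.1 hp
  obtain ⟨hbelow, hat⟩ := (firstExceed_eq_iff hj).1 hpj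
  refine ⟨mem_BSeq.2 ⟨fun x y hxy => hmono hxy, fun i => ⟨(hbd _).1, hbelow _ i.isLt⟩⟩,
    mem_BSeq.2 ⟨fun x y hxy => Nat.sub_le_sub_right (hmono (by simpa using hxy)) _, fun i => ?_⟩⟩
  have hjn : j < n := by have := i.isLt; omega
  have hlow : c j < p ⟨j + i, by omega⟩ :=
    (hat hjn).trans_le (hmono (by simp [Fin.le_def]))
  have hup := (hbd ⟨j + i, by omega⟩).2
  rw [hb] at hup
  simp only [splitAt]
  omega

lemma glue_mem (hc : Monotone c) (hb : ∀ i j, b (j + i) = c j + d i) {j : ℕ} (hj : j ≤ n)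
    {q : (Fin j → ℕ) × (Fin (n - j) → ℕ)} (hq₁ : q.1 ∈ BSeq j c) (hq₂ : q.2 ∈ BSeq (n - j) d) :
    glue c q ∈ BSeq n b ∧ firstExceed c (glue c q) = j := by
  obtain ⟨hmono₁, hbd₁⟩ := mem_BSeq.1 hq₁
  obtain ⟨hmono₂, hbd₂⟩ := mem_BSeq.1 hq₂
  have hcb : ∀ i, c i ≤ b i := fun i => (Nat.le_add_right (c i) (d 0)).trans_eq (hb 0 i).symm
  refine ⟨mem_BSeq.2 ⟨fun x y hxy => ?_, fun i => ?_⟩, (firstExceed_eq_iff hj).2 ⟨?_, ?_⟩⟩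
  · rcases lt_or_ge (y : ℕ) j with hy | hy
    · rw [glue_of_lt q x (lt_of_le_of_lt hxy hy), glue_of_lt q y hy]
      exact hmono₁ hxy
    rcases lt_or_ge (x : ℕ) j with hx | hx
    · rw [glue_of_lt q x hx, glue_of_le q y hy]
      exact ((hbd₁ _).2.trans (hc hx.le)).trans (Nat.le_add_right _ _)
    · rw [glue_of_le q x hx, glue_of_le q y hy]
      exact Nat.add_le_add_left (hmono₂ (Nat.sub_le_sub_right hxy j)) _
  · rcases lt_or_ge (i : ℕ) j with hi | hi
    · rw [glue_of_lt q i hi]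
      exact ⟨(hbd₁ _).1, (hbd₁ _).2.trans (hcb i)⟩
    · have hbi := hb (i - j) j
      rw [Nat.add_sub_cancel' hi] at hbi
      rw [glue_of_le q i hi, hbi]
      obtain ⟨hlow, hup⟩ := hbd₂ ⟨i - j, Nat.sub_lt_sub_right hi i.isLt⟩
      exact ⟨hlow.trans (Nat.le_add_left _ _), Nat.add_le_add_left hup _⟩
  · intro i hi
    rw [glue_of_lt q i hi]
    exact (hbd₁ _).2
  · intro hjn
    rw [glue_of_le q ⟨j, hjn⟩ le_rfl]
    exact Nat.lt_add_of_pos_right (hbd₂ _).1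

lemma card_filter_firstExceed_eq (hc : Monotone c) (hb : ∀ i j, b (j + i) = c j + d i)
    {j : ℕ} (hj : j ≤ n) :
    #{p ∈ BSeq n b | firstExceed c p = j} = #(BSeq j c) * #(BSeq (n - j) d) := by
  rw [← card_product]
  refine card_nbij' (splitAt c hj) (glue c) (fun p hp => ?_) (fun q hq => ?_)
    (fun p hp => ?_) (fun q _ => splitAt_glue hj q)
  · obtain ⟨hp, hpj⟩ := mem_filter.1 hp
    exact mem_product.2 (splitAt_mem hb hj hp hpj)
  · obtain ⟨hq₁, hq₂⟩ := mem_product.1 hq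
    exact mem_filter.2 (glue_mem hc hb hj hq₁ hq₂)
  · obtain ⟨hp, hpj⟩ := mem_filter.1 hp
    obtain ⟨hmono, -⟩ := mem_BSeq.1 hp
    obtain ⟨-, hat⟩ := (firstExceed_eq_iff hj).1 hpj
    refine glue_splitAt hj fun i hi => ((hat (by omega)).trans_le (hmono ?_)).le
    exact Fin.le_def.2 hi

theorem card_BSeq_eq_sum (hc : Monotone c) (hb : ∀ i j, b (j + i) = c j + d i) (n : ℕ) :
    #(BSeq n b) = ∑ j ∈ range (n + 1), #(BSeq j c) * #(BSeq (n - j) d) := by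
  rw [card_eq_sum_card_fiberwise (f := firstExceed c) (t := range (n + 1))
    fun p _ => mem_range.2 (Nat.lt_succ_of_le (firstExceed_le c p))]
  exact sum_congr rfl fun j hj =>
    card_filter_firstExceed_eq hc hb (Nat.lt_succ_iff.1 (mem_range.1 hj))

end Splitting

theorem stmt3_general (m : ℕ) (n k : ℕ) (hk : 2 ≤ k) :
    hcnt m n k (m - 1) =
      ∑ j ∈ Finset.range (n + 1), hcnt m j (k - 1) 0 * hcnt m (n - j) 1 (m - 1) := by
  obtain ⟨k, rfl⟩ : ∃ k', k = k' + 1 := ⟨k - 1, by omega⟩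
  refine card_BSeq_eq_sum (fun i j hij => ?_) (fun i j => ?_) n
  · exact Nat.sub_le_sub_right (Nat.mul_le_mul_left m (by omega)) _
  · have hm : m - 1 ≤ m * (i + 1) := (Nat.sub_le m 1).trans (Nat.le_mul_of_pos_right m i.succ_pos)
    rw [Nat.add_sub_cancel, Nat.sub_zero, ← Nat.add_sub_assoc hm]
    congr 1
    ring

theorem stmt3 (m : ℕ) (hm : 1 ≤ m) (n k : ℕ) (hk : 2 ≤ k) :
    hcnt m n k (m - 1) =
      ∑ j ∈ Finset.range (n + 1), hcnt m j (k - 1) 0 * hcnt m (n - j) 1 (m - 1) :=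
  stmt3_general m n k hk

end
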